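/- arXiv:2103.08046 — 4 statements merged into one kernel-verified Lean document; each statement's English description precedes it below -/
import Mathlib

section
/- Let G be a structure over {R,U} with domain A satisfying: (1) ∀x (∃y R(x,y) ∧ ∃y U(x,y)), and (2) the grid-confluence property ∀x∀y∀z∀w ((R(x,y) ∧ U(x,z) ∧ R(z,w)) → U(y,w)). Then there is a homomorphism h : ℕ × ℕ → A from the standard grid to G, i.e. h satisfies R(h(i,j), h(i+1,j)) and U(h(i,j), h(i,j+1)) for all i, j ∈ ℕ. -/
/-! Choose an `R`-successor function `r` and a `U`-successor function `u`, walk up the first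
column with `u` and then along every row with `r`. Confluence carries each vertical `U`-edge of
column `i` over to column `i + 1`. -/

theorem rel_iterate_of_confluence {A : Type*} {R U : A → A → Prop} {r : A → A}
    (hr : ∀ x, R x (r x)) (hconf : ∀ x y z w, R x y ∧ U x z ∧ R z w → U y w)
    {x z : A} (hxz : U x z) (n : ℕ) : U (r^[n] x) (r^[n] z) := by
  induction n with
  | zero => exact hxz
  | succ n ih =>
    rw [Function.iterate_succ_apply', Function.iterate_succ_apply']
    exact hconf _ _ _ _ ⟨hr _, ih, hr _⟩

theorem stmt_1 {A : Type*} [Nonempty A] (R U : A → A → Prop)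
    (hsucc : ∀ x, (∃ y, R x y) ∧ (∃ y, U x y))
    (hconf : ∀ x y z w, R x y ∧ U x z ∧ R z w → U y w) :
    ∃ h : ℕ × ℕ → A, ∀ i j : ℕ, R (h (i, j)) (h (i + 1, j)) ∧ U (h (i, j)) (h (i, j + 1)) := by
  choose r hr using fun x => (hsucc x).1
  choose u hu using fun x => (hsucc x).2
  obtain ⟨x₀⟩ := ‹Nonempty A›
  refine ⟨fun p => r^[p.1] (u^[p.2] x₀), fun i j => ⟨?_, ?_⟩⟩ <;> dsimp only
  · rw [Function.iterate_succ_apply']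
    exact hr _
  · rw [Function.iterate_succ_apply' u]
    exact rel_iterate_of_confluence hr hconf (hu _) i
end

section
/- Under the hypotheses (1)–(4) of the infinity axiom (∃x Z(x); ∀x ∃y (S(x,y) ∧ ¬Z(y)); ∀x∀z (S(z,x) → ∀y (y = z ∨ F(x,y,z))); ∀x∀y (∃z F(x,y,z) → ¬S(y,x))), any function f : A → A satisfying S(a, f(a)) and ¬Z(f(a)) for all a ∈ A is injective. -/
theorem eq_of_rel_of_rel {A : Type*} {S : A → A → Prop} {F : A → A → A → Prop}
    (h3 : ∀ x z, S z x → ∀ y, y = z ∨ F x y z)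
    (h4 : ∀ x y, (∃ z, F x y z) → ¬ S y x)
    {x y z : A} (hy : S y x) (hz : S z x) : y = z :=
  (h3 x z hz y).resolve_right fun hF => h4 x y ⟨z, hF⟩ hy

theorem stmt_3_general {A : Type*} (Z : A → Prop) (S : A → A → Prop) (F : A → A → A → Prop)
    (h3 : ∀ x z, S z x → ∀ y, y = z ∨ F x y z)
    (h4 : ∀ x y, (∃ z, F x y z) → ¬ S y x)
    (f : A → A)
    (hf : ∀ a, S a (f a) ∧ ¬ Z (f a)) :
    Function.Injective f := by
  intro a b hab
  have hb : S b (f a) := hab ▸ (hf b).1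
  exact eq_of_rel_of_rel h3 h4 (hf a).1 hb

theorem stmt_3 {A : Type*} (Z : A → Prop) (S : A → A → Prop) (F : A → A → A → Prop)
    (h1 : ∃ x, Z x)
    (h2 : ∀ x, ∃ y, S x y ∧ ¬ Z y)
    (h3 : ∀ x z, S z x → ∀ y, y = z ∨ F x y z)
    (h4 : ∀ x y, (∃ z, F x y z) → ¬ S y x)
    (f : A → A)
    (hf : ∀ a, S a (f a) ∧ ¬ Z (f a)) :
    Function.Injective f :=
  stmt_3_general Z S F h3 h4 f hf
end

section
/- Suppose A is a structure over the tiling signature {P_t : t ∈ 𝕋} ∪ {T_t^H : t ∈ 𝕋} ∪ {T_t^V : t ∈ 𝕋} (P_t binary, T_t^H, T_t^V ternary) satisfying: φ₁: ∀x∀y ⋁_t P_t(x,y); φ₂: ∀x∀y ⋀_{t≠t'} ¬(P_t(x,y) ∧ P_{t'}(x,y)); φ₃: there is a function Succ : A → A such that for all a, b ∈ A, ⋁_{t_R = t'_L}(T_t^H(a, Succ(a), b) ∧ P_{t'}(Succ(a), b)) and ⋁_{t_T = t'_B}(T_t^V(a, Succ(a), b) ∧ P_{t'}(b, Succ(a)));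 φ₄: ∀x∀z ⋀_t ((∃y T_t^H(x,y,z)) → P_t(x,z)); φ₅: ∀x∀z ⋀_t ((∃y T_t^V(x,y,z)) → P_t(z,x)). Then for any a ∈ A, the function σ : ℕ × ℕ → 𝕋 defined by σ(n,m) = t iff (Succⁿ(a), Succᵐ(a)) ∈ P_t is a well-defined valid 𝕋-tiling of ℕ × ℕ. -/
/-! φ₁ and φ₂ make the relations `P t` the graph of a function `A × A → 𝕋`. By φ₄ (resp. φ₅) the tile `t`
that φ₃ produces is the tile at `(a, b)` (resp. `(b, a)`), and `t'` is the one at its right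
(resp. upper) neighbour, so the colour match φ₃ asserts is the tiling condition. -/

theorem exists_eq_iff_of_existsUnique {α β : Sort*} {R : α → β → Prop} (h : ∀ x, ∃! y, R x y) :
    ∃ f : α → β, ∀ x y, f x = y ↔ R x y := by
  choose f hf huniq using h
  exact ⟨f, fun x y => ⟨(· ▸ hf x), fun hy => (huniq x y hy).symm⟩⟩

section TileAssignment

variable {A 𝕋 C : Type*} {tR tL tT tB : 𝕋 → C} {P : 𝕋 → A → A → Prop} {Succ : A → A}
  {τ : A → A → 𝕋}

theorem tR_eq_tL_succ {TH : 𝕋 → A → A → A → Prop} (hτ : ∀ x y t, τ x y = t ↔ P t x y)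
    (hH : ∀ a b, ∃ t t', tR t = tL t' ∧ TH t a (Succ a) b ∧ P t' (Succ a) b)
    (hTH : ∀ x z, ∀ t, (∃ y, TH t x y z) → P t x z) (x y : A) :
    tR (τ x y) = tL (τ (Succ x) y) := by
  obtain ⟨t, t', hmatch, hT, hP⟩ := hH x y
  rwa [(hτ _ _ _).2 (hTH _ _ _ ⟨_, hT⟩), (hτ _ _ _).2 hP]

theorem tT_eq_tB_succ {TV : 𝕋 → A → A → A → Prop} (hτ : ∀ x y t, τ x y = t ↔ P t x y)
    (hV : ∀ a b, ∃ t t', tT t = tB t' ∧ TV t a (Succ a) b ∧ P t' b (Succ a))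
    (hTV : ∀ x z, ∀ t, (∃ y, TV t x y z) → P t z x) (x y : A) :
    tT (τ x y) = tB (τ x (Succ y)) := by
  obtain ⟨t, t', hmatch, hT, hP⟩ := hV y x
  rwa [(hτ _ _ _).2 (hTV _ _ _ ⟨_, hT⟩), (hτ _ _ _).2 hP]

end TileAssignment

theorem stmt_12_general {A 𝕋 C : Type*}
    (tR tL tT tB : 𝕋 → C)
    (P : 𝕋 → A → A → Prop) (TH TV : 𝕋 → A → A → A → Prop) (Succ : A → A)
    (φ1 : ∀ x y, ∃ t, P t x y)
    (φ2 : ∀ x y, ∀ t t', t ≠ t' → ¬ (P t x y ∧ P t' x y))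
    (φ3 : ∀ a b, (∃ t t', tR t = tL t' ∧ TH t a (Succ a) b ∧ P t' (Succ a) b) ∧
                 (∃ t t', tT t = tB t' ∧ TV t a (Succ a) b ∧ P t' b (Succ a)))
    (φ4 : ∀ x z, ∀ t, (∃ y, TH t x y z) → P t x z)
    (φ5 : ∀ x z, ∀ t, (∃ y, TV t x y z) → P t z x) :
    ∀ a : A, ∃ σ : ℕ × ℕ → 𝕋,
      (∀ n m : ℕ, ∀ t : 𝕋, σ (n, m) = t ↔ P t (Succ^[n] a) (Succ^[m] a)) ∧
      (∀ n m : ℕ, tR (σ (n, m)) = tL (σ (n + 1, m)) ∧ tT (σ (n, m)) = tB (σ (n, m + 1))) := by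
  intro a
  have hunique (p : A × A) : ∃! t, P t p.1 p.2 := by
    obtain ⟨t, ht⟩ := φ1 p.1 p.2
    exact ⟨t, ht, fun t' ht' => by_contra fun hne => φ2 _ _ _ _ hne ⟨ht', ht⟩⟩
  obtain ⟨f, hf⟩ := exists_eq_iff_of_existsUnique hunique
  have hτ : ∀ x y t, f (x, y) = t ↔ P t x y := fun x y => hf (x, y)
  refine ⟨fun p => f (Succ^[p.1] a, Succ^[p.2] a), fun n m => hτ _ _, fun n m => ?_⟩
  simp only [Function.iterate_succ_apply']
  exact ⟨tR_eq_tL_succ hτ (fun a b => (φ3 a b).1) φ4 _ _,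
    tT_eq_tB_succ hτ (fun a b => (φ3 a b).2) φ5 _ _⟩

theorem stmt_12 {A 𝕋 C : Type*} [Finite 𝕋]
    (tR tL tT tB : 𝕋 → C)
    (P : 𝕋 → A → A → Prop) (TH TV : 𝕋 → A → A → A → Prop) (Succ : A → A)
    (φ1 : ∀ x y, ∃ t, P t x y)
    (φ2 : ∀ x y, ∀ t t', t ≠ t' → ¬ (P t x y ∧ P t' x y))
    (φ3 : ∀ a b, (∃ t t', tR t = tL t' ∧ TH t a (Succ a) b ∧ P t' (Succ a) b) ∧
                 (∃ t t', tT t = tB t' ∧ TV t a (Succ a) b ∧ P t' b (Succ a)))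
    (φ4 : ∀ x z, ∀ t, (∃ y, TH t x y z) → P t x z)
    (φ5 : ∀ x z, ∀ t, (∃ y, TV t x y z) → P t z x) :
    ∀ a : A, ∃ σ : ℕ × ℕ → 𝕋,
      (∀ n m : ℕ, ∀ t : 𝕋, σ (n, m) = t ↔ P t (Succ^[n] a) (Succ^[m] a)) ∧
      (∀ n m : ℕ, tR (σ (n, m)) = tL (σ (n + 1, m)) ∧ tT (σ (n, m)) = tB (σ (n, m + 1))) :=
  stmt_12_general tR tL tT tB P TH TV Succ φ1 φ2 φ3 φ4 φ5
end

section
/- If a finite set of tiles 𝕋 tiles ℕ × ℕ (i.e., a valid 𝕋-tiling σ : ℕ × ℕ → 𝕋 exists), then the structure with domain ℕ, where P_t = {(n,m) : σ(n,m) = t}, T_t^H = {(n,m,k) : σ(n,k) = t and m = n+1}, and T_t^V = {(n,m,k) : σ(k,n) = t and m = n+1}, satisfies the sentences φ₁–φ₅ of the tiling encoding Γ_𝕋. -/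
theorem stmt_13_general {𝕋 C : Type*}
    (tR tL tT tB : 𝕋 → C) (σ : ℕ × ℕ → 𝕋)
    (hH : ∀ i j : ℕ, tR (σ (i, j)) = tL (σ (i + 1, j)))
    (hV : ∀ i j : ℕ, tT (σ (i, j)) = tB (σ (i, j + 1))) :
    -- with P t n m := σ (n, m) = t,  T^H t n m k := σ (n, k) = t ∧ m = n + 1,
    -- and  T^V t n m k := σ (k, n) = t ∧ m = n + 1 :
    (∀ x y : ℕ, ∃ t, σ (x, y) = t) ∧
    (∀ x y : ℕ, ∀ t t', t ≠ t' → ¬ (σ (x, y) = t ∧ σ (x, y) = t')) ∧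
    (∀ x : ℕ, ∃ y : ℕ, ∀ z : ℕ,
      (∃ t t', tR t = tL t' ∧ (σ (x, z) = t ∧ y = x + 1) ∧ σ (y, z) = t') ∧
      (∃ t t', tT t = tB t' ∧ (σ (z, x) = t ∧ y = x + 1) ∧ σ (z, y) = t')) ∧
    (∀ x z : ℕ, ∀ t, (∃ y, σ (x, z) = t ∧ y = x + 1) → σ (x, z) = t) ∧
    (∀ x z : ℕ, ∀ t, (∃ y, σ (z, x) = t ∧ y = x + 1) → σ (z, x) = t) := by
  refine ⟨fun x y => ⟨σ (x, y), rfl⟩, ?_, fun x => ⟨x + 1, fun z => ?_⟩,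
    fun _ _ _ ⟨_, h, _⟩ => h, fun _ _ _ ⟨_, h, _⟩ => h⟩
  · rintro x y t t' hne ⟨rfl, rfl⟩
    exact hne rfl
  · exact ⟨⟨_, _, hH x z, ⟨rfl, rfl⟩, rfl⟩, ⟨_, _, hV z x, ⟨rfl, rfl⟩, rfl⟩⟩

theorem stmt_13 {𝕋 C : Type*} [Finite 𝕋]
    (tR tL tT tB : 𝕋 → C) (σ : ℕ × ℕ → 𝕋)
    (hH : ∀ i j : ℕ, tR (σ (i, j)) = tL (σ (i + 1, j)))
    (hV : ∀ i j : ℕ, tT (σ (i, j)) = tB (σ (i, j + 1))) :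
    -- with P t n m := σ (n, m) = t,  T^H t n m k := σ (n, k) = t ∧ m = n + 1,
    -- and  T^V t n m k := σ (k, n) = t ∧ m = n + 1 :
    (∀ x y : ℕ, ∃ t, σ (x, y) = t) ∧
    (∀ x y : ℕ, ∀ t t', t ≠ t' → ¬ (σ (x, y) = t ∧ σ (x, y) = t')) ∧
    (∀ x : ℕ, ∃ y : ℕ, ∀ z : ℕ,
      (∃ t t', tR t = tL t' ∧ (σ (x, z) = t ∧ y = x + 1) ∧ σ (y, z) = t') ∧
      (∃ t t', tT t = tB t' ∧ (σ (z, x) = t ∧ y = x + 1) ∧ σ (z, y) = t')) ∧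
    (∀ x z : ℕ, ∀ t, (∃ y, σ (x, z) = t ∧ y = x + 1) → σ (x, z) = t) ∧
    (∀ x z : ℕ, ∀ t, (∃ y, σ (z, x) = t ∧ y = x + 1) → σ (z, x) = t) :=
  stmt_13_general tR tL tT tB σ hH hV
end
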